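/- Under Hannan's condition, with g_n = P₀(U⁻¹Sₙ(f)) → m a.e. and sup_n|g_n| square-integrable, one has (1/n) Σ_{j=1}^n (Uʲ g_{n−j+1})² → ‖m‖₂² almost everywhere. -/

import Mathlib

/-!
The triangular average `(1/n) ∑_{j=1}^n U^j h_{n-j+1}` differs from the Birkhoff average of the
limit `h` by `(1/n) ∑_{j=1}^n U^j (h_{n-j+1} - h)`. For `j ≤ n - k` the summand is dominated by
`U^j r_k` with `r_k = sup_{i > k} |h_i - h|`, and the remaining `k` summands by `U^j (2H)`, where
`H` dominates every `|h_n|`. By Birkhoff's pointwise ergodic theorem (via Garsia's maximal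
inequality) the first part averages to `∫ r_k`, which tends to `0` by dominated convergence, and
the second to `∫ 2H - ∫ 2H = 0`. Applied to `h_n = g_n²`, `H = (sup_n |g_n|)²`.
-/

open MeasureTheory Filter Topology Finset

section MaximalErgodic

variable {α : Type*} {f : α → α} {g : α → ℝ}

def birkhoffMax (f : α → α) (g : α → ℝ) : ℕ → α → ℝ
  | 0 => 0
  | N + 1 => birkhoffMax f g N ⊔ birkhoffSum f g (N + 1)

lemma birkhoffMax_nonneg (N : ℕ) (x : α) : 0 ≤ birkhoffMax f g N x := by
  induction N with
  | zero => rfl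
  | succ N ih => exact ih.trans le_sup_left

lemma monotone_birkhoffMax (x : α) : Monotone fun N => birkhoffMax f g N x :=
  monotone_nat_of_le_succ fun _ => le_sup_left

lemma birkhoffSum_le_birkhoffMax {k N : ℕ} (hkN : k ≤ N) (x : α) :
    birkhoffSum f g k x ≤ birkhoffMax f g N x := by
  cases k with
  | zero => simpa using birkhoffMax_nonneg N x
  | succ k => exact le_sup_right.trans (monotone_birkhoffMax x hkN)

lemma birkhoffMax_le_max_add_birkhoffMax_apply (N : ℕ) (x : α) :
    birkhoffMax f g N x ≤ max 0 (g x + birkhoffMax f g N (f x)) := by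
  induction N with
  | zero => exact le_max_left _ _
  | succ N ih =>
    refine sup_le (ih.trans ?_) ?_
    · gcongr
      exact monotone_birkhoffMax _ N.le_succ
    · rw [birkhoffSum_succ']
      exact le_max_of_le_right (by gcongr; exact birkhoffSum_le_birkhoffMax N.le_succ _)

variable [MeasurableSpace α] {μ : Measure α}

lemma measurable_birkhoffSum (hf : Measurable f) (hg : Measurable g) (n : ℕ) :
    Measurable (birkhoffSum f g n) :=
  Finset.measurable_sum _ fun i _ => hg.comp (hf.iterate i)

lemma measurable_birkhoffMax (hf : Measurable f) (hg : Measurable g) (N : ℕ) :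
    Measurable (birkhoffMax f g N) := by
  induction N with
  | zero => exact measurable_const
  | succ N ih => exact ih.sup (measurable_birkhoffSum hf hg _)

lemma integrable_birkhoffSum (hf : MeasurePreserving f μ μ) (hg : Integrable g μ) (n : ℕ) :
    Integrable (birkhoffSum f g n) μ :=
  integrable_finsetSum _ fun i _ => (hf.iterate i).integrable_comp_of_integrable hg

lemma integrable_birkhoffMax (hf : MeasurePreserving f μ μ) (hg : Integrable g μ) (N : ℕ) :
    Integrable (birkhoffMax f g N) μ := by
  induction N with
  | zero => exact integrable_zero _ _ _
  | succ N ih => exact ih.sup (integrable_birkhoffSum hf hg _)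

/-- Garsia's proof: `Φ - Φ ∘ f ≤ g` on `{0 < Φ}` and `Φ - Φ ∘ f ≤ 0` off it, while `Φ - Φ ∘ f`
has integral zero. -/
theorem setIntegral_pos_birkhoffMax_nonneg (hf : MeasurePreserving f μ μ) (hgm : Measurable g)
    (hg : Integrable g μ) (N : ℕ) :
    0 ≤ ∫ x in {x | 0 < birkhoffMax f g N x}, g x ∂μ := by
  set Φ := birkhoffMax f g N
  have hE : MeasurableSet {x | 0 < Φ x} :=
    measurableSet_lt measurable_const (measurable_birkhoffMax hf.measurable hgm N)
  have hΦ : Integrable Φ μ := integrable_birkhoffMax hf hg N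
  have hΦf : Integrable (fun x => Φ (f x)) μ := hf.integrable_comp_of_integrable hΦ
  have hpt : ∀ x, Φ x - Φ (f x) ≤ {x | 0 < Φ x}.indicator g x := by
    intro x
    by_cases hx : 0 < Φ x
    · rw [Set.indicator_of_mem (show x ∈ {x | 0 < Φ x} from hx)]
      have := birkhoffMax_le_max_add_birkhoffMax_apply (f := f) (g := g) N x
      rw [le_max_iff] at this
      rcases this with h | h <;> linarith
    · rw [Set.indicator_of_notMem (show x ∉ {x | 0 < Φ x} from hx)]
      linarith [birkhoffMax_nonneg (f := f) (g := g) N (f x)]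
  have hzero : ∫ x, (Φ x - Φ (f x)) ∂μ = 0 := by
    rw [integral_sub hΦ hΦf, ← integral_map hf.measurable.aemeasurable
      (by rw [hf.map_eq]; exact hΦ.1), hf.map_eq, sub_self]
  calc 0 = ∫ x, (Φ x - Φ (f x)) ∂μ := hzero.symm
    _ ≤ ∫ x, {x | 0 < Φ x}.indicator g x ∂μ := integral_mono (hΦ.sub hΦf) (hg.indicator hE) hpt
    _ = _ := integral_indicator hE

theorem setIntegral_iUnion_pos_birkhoffMax_nonneg (hf : MeasurePreserving f μ μ)
    (hgm : Measurable g) (hg : Integrable g μ) :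
    0 ≤ ∫ x in ⋃ N, {x | 0 < birkhoffMax f g N x}, g x ∂μ :=
  ge_of_tendsto'
    (tendsto_setIntegral_of_monotone
      (fun N => measurableSet_lt measurable_const (measurable_birkhoffMax hf.measurable hgm N))
      (fun _ _ hNM _ hx => hx.trans_le (monotone_birkhoffMax _ hNM)) hg.integrableOn)
    (setIntegral_pos_birkhoffMax_nonneg hf hgm hg)

end MaximalErgodic

section PointwiseErgodic

variable {α : Type*} {f : α → α} {g : α → ℝ}

lemma bddAbove_range_birkhoffSum_apply_iff (x : α) :
    BddAbove (Set.range fun n => birkhoffSum f g n (f x)) ↔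
      BddAbove (Set.range fun n => birkhoffSum f g n x) := by
  simp only [bddAbove_def, Set.forall_mem_range]
  constructor
  · rintro ⟨C, hC⟩
    refine ⟨max 0 (g x + C), fun n => ?_⟩
    cases n with
    | zero => simp
    | succ n => rw [birkhoffSum_succ']; exact le_max_of_le_right (by linarith [hC n])
  · rintro ⟨C, hC⟩
    exact ⟨C - g x, fun n => by linarith [hC (n + 1), birkhoffSum_succ' f g n x]⟩

lemma sum_Icc_iterate_eq_birkhoffSum {M : Type*} [AddCommMonoid M] (f : α → α) (φ : α → M)
    (n : ℕ) (x : α) : ∑ j ∈ Icc 1 n, φ (f^[j] x) = birkhoffSum f φ n (f x) := by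
  rw [birkhoffSum, ← Ico_add_one_right_eq_Icc, sum_Ico_eq_sum_range, Nat.add_sub_cancel]
  simp only [add_comm 1, Function.iterate_succ_apply]

variable [MeasurableSpace α] {μ : Measure α}

/-- The set where the Birkhoff sums are bounded above is `f`-invariant; were it null, the maximal
ergodic theorem would give `0 ≤ ∫ g`. -/
theorem ae_bddAbove_birkhoffSum_of_integral_neg (hf : Ergodic f μ) (hgm : Measurable g)
    (hg : Integrable g μ) (hneg : ∫ x, g x ∂μ < 0) :
    ∀ᵐ x ∂μ, BddAbove (Set.range fun n => birkhoffSum f g n x) := by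
  set B := {x | BddAbove (Set.range fun n => birkhoffSum f g n x)}
  have hinv : f ⁻¹' B = B := Set.ext bddAbove_range_birkhoffSum_apply_iff
  have hBm : MeasurableSet B :=
    measurableSet_bddAbove_range (measurable_birkhoffSum hf.measurable hgm)
  rcases hf.ae_empty_or_univ hBm hinv with hB | hB
  · set U := ⋃ N, {x | 0 < birkhoffMax f g N x}
    have hcompl : Bᶜ ⊆ U := by
      intro x hx
      obtain ⟨n, hn⟩ : ∃ n, 0 < birkhoffSum f g n x := by
        by_contra! h
        exact hx ⟨0, Set.forall_mem_range.mpr h⟩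
      exact Set.mem_iUnion.mpr ⟨n, hn.trans_le (birkhoffSum_le_birkhoffMax le_rfl x)⟩
    have hU : U =ᵐ[μ] (Set.univ : Set α) :=
      ae_eq_univ.mpr (measure_mono_null (Set.compl_subset_comm.mp hcompl) (ae_eq_empty.mp hB))
    have := setIntegral_iUnion_pos_birkhoffMax_nonneg hf.toMeasurePreserving hgm hg
    rw [setIntegral_congr_set hU, setIntegral_univ] at this
    linarith
  · exact ae_iff.mpr (ae_eq_univ.mp hB)

variable [IsProbabilityMeasure μ]

theorem ae_eventually_birkhoffAverage_lt (hf : Ergodic f μ) (hgm : Measurable g)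
    (hg : Integrable g μ) {b : ℝ} (hb : ∫ x, g x ∂μ < b) :
    ∀ᵐ x ∂μ, ∀ᶠ n in atTop, birkhoffAverage ℝ f g n x < b := by
  set c := (∫ x, g x ∂μ + b) / 2 with hc
  have hneg : ∫ x, (g x - c) ∂μ < 0 := by
    rw [integral_sub hg (integrable_const c)]
    simp only [integral_const, probReal_univ, one_smul]
    linarith
  filter_upwards [ae_bddAbove_birkhoffSum_of_integral_neg (g := fun x => g x - c) hf
    (hgm.sub measurable_const) (hg.sub (integrable_const c)) hneg] with x ⟨C, hC⟩
  have hsum : ∀ n : ℕ, birkhoffSum f g n x ≤ n * c + C := fun n => by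
    have := hC ⟨n, rfl⟩
    simp only [birkhoffSum, Finset.sum_sub_distrib, Finset.sum_const, Finset.card_range,
      nsmul_eq_mul] at this ⊢
    linarith
  filter_upwards [(tendsto_const_div_atTop_nhds_zero_nat C).eventually
    (gt_mem_nhds (show 0 < b - c by linarith)), eventually_ge_atTop 1] with n hCn hn
  have hn0 : (0 : ℝ) < n := by exact_mod_cast hn
  rw [birkhoffAverage, smul_eq_mul, inv_mul_eq_div, div_lt_iff₀ hn0]
  calc birkhoffSum f g n x ≤ n * c + C := hsum n
    _ = n * (c + C / n) := by field_simp
    _ < b * n := by nlinarith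

theorem ae_forall_eventually_birkhoffAverage_lt (hf : Ergodic f μ) (hgm : Measurable g)
    (hg : Integrable g μ) :
    ∀ᵐ x ∂μ, ∀ b, ∫ x, g x ∂μ < b → ∀ᶠ n in atTop, birkhoffAverage ℝ f g n x < b := by
  have hrat : ∀ᵐ x ∂μ, ∀ q : ℚ, ∫ x, g x ∂μ < q →
      ∀ᶠ n in atTop, birkhoffAverage ℝ f g n x < q :=
    ae_all_iff.mpr fun q => by
      by_cases hq : ∫ x, g x ∂μ < q
      · filter_upwards [ae_eventually_birkhoffAverage_lt hf hgm hg hq] with x hx _ using hx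
      · exact ae_of_all _ fun _ h => absurd h hq
  filter_upwards [hrat] with x hx b hb
  obtain ⟨q, hIq, hqb⟩ := exists_rat_btwn hb
  exact (hx q hIq).mono fun _ h => h.trans hqb

theorem ae_tendsto_birkhoffAverage_of_measurable (hf : Ergodic f μ) (hgm : Measurable g)
    (hg : Integrable g μ) :
    ∀ᵐ x ∂μ, Tendsto (birkhoffAverage ℝ f g · x) atTop (𝓝 (∫ x, g x ∂μ)) := by
  filter_upwards [ae_forall_eventually_birkhoffAverage_lt hf hgm hg,
    ae_forall_eventually_birkhoffAverage_lt hf hgm.neg hg.neg] with x hup hlow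
  refine tendsto_order.mpr ⟨fun a ha => ?_, hup⟩
  refine (hlow (-a) (by rwa [Pi.neg_def, integral_neg, neg_lt_neg_iff])).mono fun n hn => ?_
  rw [birkhoffAverage_neg, Pi.neg_apply, Pi.neg_apply] at hn
  exact neg_lt_neg_iff.mp hn

theorem ae_tendsto_birkhoffAverage (hf : Ergodic f μ) (hg : Integrable g μ) :
    ∀ᵐ x ∂μ, Tendsto (birkhoffAverage ℝ f g · x) atTop (𝓝 (∫ x, g x ∂μ)) := by
  have hae := hg.1.ae_eq_mk
  have hsum := ae_all_iff.mpr
    (hf.quasiMeasurePreserving.birkhoffAverage_ae_eq_of_ae_eq ℝ hae)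
  filter_upwards [hsum, ae_tendsto_birkhoffAverage_of_measurable hf
    hg.1.stronglyMeasurable_mk.measurable (hg.congr hae)] with x hx hlim
  rw [integral_congr_ae hae]
  exact hlim.congr fun n => (hx n).symm

theorem ae_tendsto_sum_Icc_iterate_div (hf : Ergodic f μ) {φ : α → ℝ} (hφ : Integrable φ μ) :
    ∀ᵐ x ∂μ, Tendsto (fun n : ℕ => (∑ j ∈ Icc 1 n, φ (f^[j] x)) / n) atTop
      (𝓝 (∫ x, φ x ∂μ)) := by
  filter_upwards [hf.quasiMeasurePreserving.ae (ae_tendsto_birkhoffAverage hf hφ)] with x hx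
  simpa only [sum_Icc_iterate_eq_birkhoffSum, birkhoffAverage, smul_eq_mul, inv_mul_eq_div]
    using hx

end PointwiseErgodic

section TriangularArrays

lemma tendsto_sub_div_of_tendsto_div {a : ℕ → ℝ} {L : ℝ} (k : ℕ)
    (h : Tendsto (fun n => a n / n) atTop (𝓝 L)) :
    Tendsto (fun n => a (n - k) / n) atTop (𝓝 L) := by
  rw [← tendsto_add_atTop_iff_nat k]
  have := h.mul (tendsto_natCast_div_add_atTop (k : ℝ))
  rw [mul_one] at this
  refine this.congr' ((eventually_ne_atTop 0).mono fun m hm => ?_)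
  simp only [Nat.add_sub_cancel, Nat.cast_add]
  field_simp

lemma tendsto_zero_of_forall_eventually_abs_le {ι κ : Type*} {l : Filter ι} {l' : Filter κ}
    [l'.NeBot] {D : ι → ℝ} {b : κ → ι → ℝ} {c : κ → ℝ}
    (hD : ∀ k, ∀ᶠ n in l, |D n| ≤ b k n) (hb : ∀ k, Tendsto (b k) l (𝓝 (c k)))
    (hc : Tendsto c l' (𝓝 0)) : Tendsto D l (𝓝 0) := by
  refine Metric.tendsto_nhds.mpr fun ε hε => ?_
  obtain ⟨k, hk⟩ := (hc.eventually (gt_mem_nhds hε)).exists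
  filter_upwards [hD k, (hb k).eventually (gt_mem_nhds hk)] with n h₁ h₂
  rw [Real.dist_0_eq_abs]
  exact h₁.trans_lt h₂

lemma abs_sum_Icc_triangular_le {e : ℕ → ℕ → ℝ} {R B : ℕ → ℝ} {k : ℕ} (hR : ∀ j, 0 ≤ R j)
    (hB : ∀ n j, |e (n + 1) j| ≤ B j) (hRe : ∀ n j, k + 1 ≤ n → |e n j| ≤ R j) (n : ℕ) :
    |∑ j ∈ Icc 1 n, e (n - j + 1) j| ≤
      ∑ j ∈ Icc 1 n, R j + (∑ j ∈ Icc 1 n, B j - ∑ j ∈ Icc 1 (n - k), B j) := by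
  have hsub : Icc 1 (n - k) ⊆ Icc 1 n := Icc_subset_Icc_right (n.sub_le k)
  calc |∑ j ∈ Icc 1 n, e (n - j + 1) j|
      ≤ ∑ j ∈ Icc 1 n, |e (n - j + 1) j| := abs_sum_le_sum_abs _ _
    _ = ∑ j ∈ Icc 1 n \ Icc 1 (n - k), |e (n - j + 1) j|
          + ∑ j ∈ Icc 1 (n - k), |e (n - j + 1) j| := (sum_sdiff hsub).symm
    _ ≤ ∑ j ∈ Icc 1 n \ Icc 1 (n - k), B j + ∑ j ∈ Icc 1 (n - k), R j := by
      gcongr with j hj j hj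
      · exact hB _ j
      · exact hRe _ j (by simp only [mem_Icc] at hj; omega)
    _ ≤ ∑ j ∈ Icc 1 n \ Icc 1 (n - k), B j + ∑ j ∈ Icc 1 n, R j := by
      gcongr
      exact fun j _ _ => hR j
    _ = _ := by rw [← sum_sdiff hsub (f := B)]; ring

/-- `u n j` stands for `(h_n - h) (f^[j] x)`. -/
theorem tendsto_sum_Icc_triangular_div {u R : ℕ → ℕ → ℝ} {B ρ : ℕ → ℝ} {β : ℝ}
    (hB : ∀ n j, |u (n + 1) j| ≤ B j) (hR : ∀ k j, 0 ≤ R k j)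
    (hRu : ∀ k n j, k + 1 ≤ n → |u n j| ≤ R k j)
    (hRavg : ∀ k, Tendsto (fun n : ℕ => (∑ j ∈ Icc 1 n, R k j) / n) atTop (𝓝 (ρ k)))
    (hBavg : Tendsto (fun n : ℕ => (∑ j ∈ Icc 1 n, B j) / n) atTop (𝓝 β))
    (hρ : Tendsto ρ atTop (𝓝 0)) :
    Tendsto (fun n : ℕ => (∑ j ∈ Icc 1 n, u (n - j + 1) j) / n) atTop (𝓝 0) := by
  refine tendsto_zero_of_forall_eventually_abs_le (b := fun k n => (∑ j ∈ Icc 1 n, R k j) / n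
      + ((∑ j ∈ Icc 1 n, B j) / n - (∑ j ∈ Icc 1 (n - k), B j) / n)) (fun k => ?_) (fun k => ?_) hρ
  · filter_upwards with n
    rw [abs_div, Nat.abs_cast, ← sub_div, ← add_div]
    exact div_le_div_of_nonneg_right
      (abs_sum_Icc_triangular_le (hR k) hB (hRu k) n) n.cast_nonneg
  · simpa using (hRavg k).add (hBavg.sub (tendsto_sub_div_of_tendsto_div
      (a := fun n => ∑ j ∈ Icc 1 n, B j) k hBavg))

end TriangularArrays

section TruncatedTailSup

variable {α : Type*} {e : ℕ → α → ℝ} {B : α → ℝ}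

/-- Truncating at `B` keeps the supremum finite at every point, not only where `|e n| ≤ B`. -/
noncomputable def truncTailSup (e : ℕ → α → ℝ) (B : α → ℝ) (k : ℕ) (x : α) : ℝ :=
  ⨆ i, min |e (k + 1 + i) x| (B x)

lemma bddAbove_range_min_abs (k : ℕ) (x : α) :
    BddAbove (Set.range fun i => min |e (k + 1 + i) x| (B x)) :=
  ⟨B x, Set.forall_mem_range.mpr fun _ => min_le_right _ _⟩

lemma truncTailSup_le (k : ℕ) (x : α) : truncTailSup e B k x ≤ B x :=
  ciSup_le fun _ => min_le_right _ _

lemma min_abs_le_truncTailSup {k n : ℕ} (hkn : k + 1 ≤ n) (x : α) :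
    min |e n x| (B x) ≤ truncTailSup e B k x := by
  obtain ⟨i, rfl⟩ := Nat.exists_eq_add_of_le hkn
  exact le_ciSup (bddAbove_range_min_abs k x) i

lemma truncTailSup_nonneg {x : α} (hB : 0 ≤ B x) (k : ℕ) : 0 ≤ truncTailSup e B k x :=
  (le_min (abs_nonneg _) hB).trans (min_abs_le_truncTailSup le_rfl x)

lemma tendsto_truncTailSup {x : α} (he : Tendsto (fun n => e n x) atTop (𝓝 0)) (hB : 0 ≤ B x) :
    Tendsto (fun k => truncTailSup e B k x) atTop (𝓝 0) := by
  refine tendsto_order.mpr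
    ⟨fun a ha => Eventually.of_forall fun k => ha.trans_le (truncTailSup_nonneg hB k),
      fun ε hε => ?_⟩
  have habs : Tendsto (fun n => |e n x|) atTop (𝓝 0) := by simpa using he.abs
  obtain ⟨K, hK⟩ := eventually_atTop.mp (habs.eventually (gt_mem_nhds (half_pos hε)))
  filter_upwards [eventually_ge_atTop K] with k hk
  calc truncTailSup e B k x ≤ ε / 2 :=
        ciSup_le fun _ => (min_le_left _ _).trans (hK _ (by omega)).le
    _ < ε := half_lt_self hε

lemma norm_truncTailSup_le {x : α} (hB : 0 ≤ B x) (k : ℕ) : ‖truncTailSup e B k x‖ ≤ B x := by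
  rw [Real.norm_eq_abs, abs_of_nonneg (truncTailSup_nonneg hB k)]
  exact truncTailSup_le k x

variable [MeasurableSpace α] {μ : Measure α}

lemma aestronglyMeasurable_truncTailSup (he : ∀ n, AEStronglyMeasurable (e n) μ)
    (hB : AEStronglyMeasurable B μ) (k : ℕ) : AEStronglyMeasurable (truncTailSup e B k) μ :=
  (AEMeasurable.iSup fun _ => (he _).aemeasurable.abs.min hB.aemeasurable).aestronglyMeasurable

lemma integrable_truncTailSup (he : ∀ n, AEStronglyMeasurable (e n) μ) (hB : Integrable B μ)
    (hB0 : ∀ᵐ x ∂μ, 0 ≤ B x) (k : ℕ) : Integrable (truncTailSup e B k) μ :=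
  hB.mono' (aestronglyMeasurable_truncTailSup he hB.1 k)
    (hB0.mono fun _ hx => norm_truncTailSup_le hx k)

lemma tendsto_integral_truncTailSup (he : ∀ n, AEStronglyMeasurable (e n) μ)
    (hB : Integrable B μ) (hB0 : ∀ᵐ x ∂μ, 0 ≤ B x)
    (hconv : ∀ᵐ x ∂μ, Tendsto (fun n => e n x) atTop (𝓝 0)) :
    Tendsto (fun k => ∫ x, truncTailSup e B k x ∂μ) atTop (𝓝 0) := by
  have := tendsto_integral_of_dominated_convergence B
    (aestronglyMeasurable_truncTailSup he hB.1) hB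
    (fun k => hB0.mono fun _ hx => norm_truncTailSup_le hx k)
    (by filter_upwards [hconv, hB0] with x hx hx0 using tendsto_truncTailSup hx hx0)
  rwa [integral_zero] at this

end TruncatedTailSup

section TriangularErgodic

variable {α : Type*} [MeasurableSpace α] {μ : Measure α} [IsProbabilityMeasure μ] {f : α → α}

theorem ae_tendsto_sum_Icc_triangular_div (hf : Ergodic f μ) {h : ℕ → α → ℝ} {g H : α → ℝ}
    (hh : ∀ n, AEStronglyMeasurable (h n) μ) (hH : Integrable H μ)
    (hbound : ∀ n, ∀ᵐ x ∂μ, |h (n + 1) x| ≤ H x)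
    (hconv : ∀ᵐ x ∂μ, Tendsto (fun n => h n x) atTop (𝓝 (g x))) :
    ∀ᵐ x ∂μ, Tendsto (fun n : ℕ => (∑ j ∈ Icc 1 n, h (n - j + 1) (f^[j] x)) / n)
      atTop (𝓝 (∫ x, g x ∂μ)) := by
  set e : ℕ → α → ℝ := fun n x => h n x - g x
  set B : α → ℝ := fun x => 2 * H x
  set r := truncTailSup e B
  have hgH : ∀ᵐ x ∂μ, |g x| ≤ H x := by
    filter_upwards [hconv, ae_all_iff.mpr hbound] with x hx hxH
    exact le_of_tendsto' ((hx.comp (tendsto_add_atTop_nat 1)).abs) hxH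
  have heB : ∀ᵐ x ∂μ, ∀ n, |e (n + 1) x| ≤ B x := by
    filter_upwards [hgH, ae_all_iff.mpr hbound] with x hxl hxH n
    exact (abs_sub _ _).trans (by linarith [hxH n])
  have hgm : AEStronglyMeasurable g μ := aestronglyMeasurable_of_tendsto_ae atTop hh hconv
  have hgi : Integrable g μ := hH.mono' hgm hgH
  have hBi : Integrable B μ := hH.const_mul 2
  have hB0 : ∀ᵐ x ∂μ, 0 ≤ B x := heB.mono fun _ hx => (abs_nonneg _).trans (hx 0)
  have he : ∀ n, AEStronglyMeasurable (e n) μ := fun n => (hh n).sub hgm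
  have hri : ∀ k, Integrable (r k) μ := integrable_truncTailSup he hBi hB0
  have hIr : Tendsto (fun k => ∫ x, r k x ∂μ) atTop (𝓝 0) :=
    tendsto_integral_truncTailSup he hBi hB0
      (hconv.mono fun x hx => by simpa [e] using hx.sub_const (g x))
  have hgood : ∀ᵐ x ∂μ, ∀ j n, |e (n + 1) (f^[j] x)| ≤ B (f^[j] x) :=
    ae_all_iff.mpr fun j => (hf.quasiMeasurePreserving.iterate j).ae heB
  filter_upwards [hgood, ae_tendsto_sum_Icc_iterate_div hf hgi,
    ae_tendsto_sum_Icc_iterate_div hf hBi,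
    ae_all_iff.mpr fun k => ae_tendsto_sum_Icc_iterate_div hf (hri k)] with x hx hA hBavg hRavg
  have hRu : ∀ k n j, k + 1 ≤ n → |e n (f^[j] x)| ≤ r k (f^[j] x) := by
    intro k n j hkn
    obtain ⟨m, rfl⟩ : ∃ m, n = m + 1 := ⟨n - 1, by omega⟩
    exact (min_eq_left (hx j m)).symm.trans_le (min_abs_le_truncTailSup hkn _)
  have hD := tendsto_sum_Icc_triangular_div (u := fun n j => e n (f^[j] x))
    (fun n j => hx j n) (fun k j => truncTailSup_nonneg ((abs_nonneg _).trans (hx j 0)) k)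
    hRu hRavg hBavg hIr
  refine (add_zero (∫ x, g x ∂μ) ▸ hA.add hD).congr fun n => ?_
  simp only [e, sum_sub_distrib]
  ring

end TriangularErgodic

theorem coboundary_paper_stmt12_general
    {Ω : Type*} {mΩ : MeasurableSpace Ω} (μ : Measure Ω) [IsProbabilityMeasure μ]
    (T : Ω ≃ᵐ Ω) (hT : Ergodic T μ)
    (ℱ : ℤ → MeasurableSpace Ω) (hle : ∀ i, ℱ i ≤ mΩ)
    (f : Ω → ℝ)
    -- `gk n = P₀ (U⁻¹ Sₙ(f))`
    (gk : ℕ → Ω → ℝ)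
    (hgk : ∀ n, gk n =
      (μ[(fun ω => ∑ j ∈ Finset.range n, f ((⇑T)^[j] ω)) | ℱ 0]) -
        (μ[(fun ω => ∑ j ∈ Finset.range n, f ((⇑T)^[j] ω)) | ℱ (-1)]))
    (m : Ω → ℝ)
    (hconv : ∀ᵐ ω ∂μ, Tendsto (fun n => gk n ω) atTop (nhds (m ω)))
    (hsup : MemLp (fun ω => ⨆ n : ℕ, |gk (n + 1) ω|) 2 μ) :
    ∀ᵐ ω ∂μ, Tendsto
      (fun n : ℕ =>
        (∑ j ∈ Finset.Icc 1 n, (gk (n - j + 1) ((⇑T)^[j] ω)) ^ 2) / n)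
      atTop (nhds (∫ ω, (m ω) ^ 2 ∂μ)) := by
  have hgkm : ∀ n, AEStronglyMeasurable (gk n) μ := fun n => by
    rw [hgk n]
    exact ((stronglyMeasurable_condExp.mono (hle 0)).sub
      (stronglyMeasurable_condExp.mono (hle (-1)))).aestronglyMeasurable
  have hbound : ∀ n, ∀ᵐ ω ∂μ, |gk (n + 1) ω ^ 2| ≤ (⨆ i : ℕ, |gk (i + 1) ω|) ^ 2 := fun n => by
    filter_upwards [hconv] with ω hω
    have hbdd := (hω.comp (tendsto_add_atTop_nat 1)).abs.bddAbove_range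
    rw [abs_pow]
    exact pow_le_pow_left₀ (abs_nonneg _) (le_ciSup hbdd n) 2
  exact ae_tendsto_sum_Icc_triangular_div hT (h := fun n ω => gk n ω ^ 2)
    (fun n => (hgkm n).pow 2) hsup.integrable_sq hbound (hconv.mono fun _ hω => hω.pow 2)

/-- Under Hannan's condition, with `gₙ = P₀(U⁻¹Sₙ(f)) → m` a.e. and `sup_n |gₙ|`
square-integrable, one has `(1/n) ∑_{j=1}^n (Uʲ g_{n-j+1})² → ‖m‖₂²` a.e. -/
theorem coboundary_paper_stmt12
    {Ω : Type*} {mΩ : MeasurableSpace Ω} (μ : Measure Ω) [IsProbabilityMeasure μ]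
    (T : Ω ≃ᵐ Ω) (hT : Ergodic T μ)
    (ℱ : ℤ → MeasurableSpace Ω) (hle : ∀ i, ℱ i ≤ mΩ) (hmono : Monotone ℱ)
    (hshift : ∀ i, ℱ (i + 1) = (ℱ i).comap T)
    (f : Ω → ℝ) (hf2 : MemLp f 2 μ) (hf0 : ∫ ω, f ω ∂μ = 0)
    (hfmeas : StronglyMeasurable[ℱ 0] f)
    (htail : μ[f | ⨅ i : ℤ, ℱ i] =ᵐ[μ] 0)
    (hannan : ∑' k : ℕ,
      eLpNorm ((μ[f | ℱ (-(k : ℤ))]) - (μ[f | ℱ (-(k : ℤ) - 1)])) 2 μ ≠ ⊤)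
    -- `gk n = P₀ (U⁻¹ Sₙ(f))`
    (gk : ℕ → Ω → ℝ)
    (hgk : ∀ n, gk n =
      (μ[(fun ω => ∑ j ∈ Finset.range n, f ((⇑T)^[j] ω)) | ℱ 0]) -
        (μ[(fun ω => ∑ j ∈ Finset.range n, f ((⇑T)^[j] ω)) | ℱ (-1)]))
    (m : Ω → ℝ)
    (hconv : ∀ᵐ ω ∂μ, Tendsto (fun n => gk n ω) atTop (nhds (m ω)))
    (hsup : MemLp (fun ω => ⨆ n : ℕ, |gk (n + 1) ω|) 2 μ) :
    ∀ᵐ ω ∂μ, Tendsto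
      (fun n : ℕ =>
        (∑ j ∈ Finset.Icc 1 n, (gk (n - j + 1) ((⇑T)^[j] ω)) ^ 2) / n)
      atTop (nhds (∫ ω, (m ω) ^ 2 ∂μ)) :=
  coboundary_paper_stmt12_general μ T hT ℱ hle f gk hgk m hconv hsup
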